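/- Let E be a finite-dimensional real inner product space, p ≥ 2 a real number, C > 0, μ ≥ 0. Let S : [0,∞) → ℝ be differentiable with S(0) = 0 and S′(t) = (1 + S(t)^p)^{1/p}, and define cosh_p(x) = (1 + S(x)^p)^{1/p}, sinhc_p(x) = S(x)/x for x > 0 with sinhc_p(0) = 1, tanhc_p(x) = sinhc_p(x)/cosh_p(x), cothc_p(x) = 1/tanhc_p(x). Let h : E → ℝ be convex and differentiable, f : E → ℝ differentiable and μ-uniformly convex with respect to h, and x* a minimizer of f. Suppose X, Z : [0,∞) → E are continuous, X is differentiable and t ↦ ∇h(Z(t)) is differentiable on (0,∞), and for all t > 0: Ẋ(t) = (p/t)·cothc_p(C^{1/p}·μ^{1/p}·t)·(Z(t) − X(t)) and d/dt[∇h(Z(t))] = C·p·t^{p−1}·tanhc_p(C^{1/p}·μ^{1/p}·t)^{p−1}·(μ·∇h(X(t)) − μ·∇h(Z(t)) − ∇f(X(t))). Then the energy function 𝓔(t) = cosh_p(C^{1/p}·μ^{1/p}·t)^p·D_h(x*, Z(t)) + C·t^p·sinhc_p(C^{1/p}·μ^{1/p}·t)^p·(f(X(t)) − f(x*)) is monotonically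 nonincreasing on [0,∞). -/

import Mathlib

/-!
Put `c = (Cμ)^{1/p}`, `σ(t) = t·sinhc_p(ct)` and `ψ(t) = C·σ(t)^p`. Since `c·σ(t) = sinh_p(ct)` and
`cosh_p^p = 1 + sinh_p^p`, the energy is `(1 + μψ)·D_h(x*, Z) + ψ·(f(X) − f(x*))`, and the two flow
coefficients are exactly `ψ'/ψ` and `ψ'/(1 + μψ)`. For flows of this shape the three-point identity
of Bregman divergences gives `𝓔' = ψ'·(μ D_h(x*, X) − μ D_h(Z, X) − D_f(x*, X))`, which is `≤ 0` by
uniform convexity.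

Only `∇h ∘ Z`, not `Z`, is differentiable, so `D_h(x*, Z(t))` is differentiated through the
three-point identity: the remainder `D_h(Z(t), Z(s))` lies between `0` and
`⟪∇h(Z s) − ∇h(Z t), Z s − Z t⟫ = o(s − t)`. Continuity of the energy at `t = 0` uses that the
gradient of a differentiable convex function on a finite-dimensional space is continuous.
-/

open scoped RealInnerProductSpace
open Filter Set Topology Asymptotics

/-- The Bregman divergence `D_h(y, x) = h(y) − h(x) − ⟨∇h(x), y − x⟩`. -/
noncomputable def breg {E : Type*} [NormedAddCommGroup E] [InnerProductSpace ℝ E]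
    [CompleteSpace E] (h : E → ℝ) (y x : E) : ℝ :=
  h y - h x - ⟪gradient h x, y - x⟫

section Bregman

variable {E : Type*} [NormedAddCommGroup E] [InnerProductSpace ℝ E] [CompleteSpace E]
  {h : E → ℝ}

theorem DifferentiableAt.hasDerivAt_comp_inner_gradient {γ : ℝ → E} {γ' : E} {t : ℝ}
    (hh : DifferentiableAt ℝ h (γ t)) (hγ : HasDerivAt γ γ' t) :
    HasDerivAt (fun τ => h (γ τ)) ⟪gradient h (γ t), γ'⟫ t := by
  rw [inner_gradient_left]
  exact hh.hasFDerivAt.comp_hasDerivAt t hγ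

theorem ConvexOn.add_inner_gradient_le (hconv : ConvexOn ℝ univ h) (hdiff : Differentiable ℝ h)
    (x y : E) : h x + ⟪gradient h x, y - x⟫ ≤ h y := by
  have hline : ConvexOn ℝ univ (fun s : ℝ => h (x + s • (y - x))) := by
    simpa [Function.comp_def, AffineMap.lineMap_apply, add_comm] using
      hconv.comp_affineMap (AffineMap.lineMap x y)
  have hderiv : HasDerivAt (fun s : ℝ => h (x + s • (y - x))) ⟪gradient h x, y - x⟫ 0 := by
    simpa using (hdiff _).hasDerivAt_comp_inner_gradient
      (((hasDerivAt_id (0 : ℝ)).smul_const (y - x)).const_add x)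
  have := hline.le_slope_of_hasDerivAt (mem_univ 0) (mem_univ 1) one_pos hderiv
  simp only [slope_def_field, one_smul, zero_smul, add_zero, add_sub_cancel, sub_zero,
    div_one] at this
  linarith

theorem breg_nonneg (hconv : ConvexOn ℝ univ h) (hdiff : Differentiable ℝ h) (y x : E) :
    0 ≤ breg h y x := by
  have := hconv.add_inner_gradient_le hdiff x y
  rw [breg]
  linarith

@[simp]
theorem breg_self (x : E) : breg h x x = 0 := by
  simp [breg]

theorem breg_add_breg_swap (x y : E) :
    breg h x y + breg h y x = ⟪gradient h x - gradient h y, x - y⟫ := by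
  simp only [breg, inner_sub_right, real_inner_comm x, real_inner_comm y]
  ring

theorem breg_sub_breg_add_inner (x y z : E) :
    breg h x y - breg h x z + ⟪gradient h y - gradient h z, x - z⟫ = breg h z y := by
  simp only [breg, inner_sub_left, inner_sub_right]
  ring

theorem ConvexOn.upperSemicontinuous_inner_gradient (hconv : ConvexOn ℝ univ h)
    (hdiff : Differentiable ℝ h) (v : E) :
    UpperSemicontinuous fun z => ⟪gradient h z, v⟫ := by
  intro x y hy
  -- `⟪∇h z, v⟫` lies below every difference quotient of `h` at `z` along `v`, and these
  -- quotients are continuous in `z` and converge to `⟪∇h x, v⟫` at `x`.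
  have hslope : Tendsto (fun s : ℝ => s⁻¹ * (h (x + s • v) - h x)) (𝓝[>] 0)
      (𝓝 ⟪gradient h x, v⟫) := by
    simpa using ((hdiff _).hasDerivAt_comp_inner_gradient
      (((hasDerivAt_id (0 : ℝ)).smul_const v).const_add x)).tendsto_slope_zero_right
  obtain ⟨s, hsy, hs⟩ := ((hslope.eventually (gt_mem_nhds hy)).and self_mem_nhdsWithin).exists
  have hcont : Continuous fun z => s⁻¹ * (h (z + s • v) - h z) := by
    have := hdiff.continuous
    fun_prop
  filter_upwards [hcont.continuousAt.eventually (gt_mem_nhds hsy)] with z hz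
  have hsupport := hconv.add_inner_gradient_le hdiff z (z + s • v)
  rw [add_sub_cancel_left, real_inner_smul_right] at hsupport
  calc ⟪gradient h z, v⟫ ≤ s⁻¹ * (h (z + s • v) - h z) := by
        rw [le_inv_mul_iff₀ (mem_Ioi.mp hs)]; linarith
    _ < y := hz

theorem ConvexOn.continuous_inner_gradient (hconv : ConvexOn ℝ univ h)
    (hdiff : Differentiable ℝ h) (v : E) : Continuous fun z => ⟪gradient h z, v⟫ := by
  refine continuous_iff_continuousAt.2 fun x => tendsto_order.2 ⟨fun y hy => ?_,
    fun y hy => hconv.upperSemicontinuous_inner_gradient hdiff v x y hy⟩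
  have := hconv.upperSemicontinuous_inner_gradient hdiff (-v) x (-y) (by simpa using hy)
  simpa using this

theorem ConvexOn.continuous_gradient [FiniteDimensional ℝ E] (hconv : ConvexOn ℝ univ h)
    (hdiff : Differentiable ℝ h) : Continuous (gradient h) := by
  let b := stdOrthonormalBasis ℝ E
  have hsum : gradient h = fun z => ∑ i, ⟪gradient h z, b i⟫ • b i := by
    ext1 z
    simp_rw [real_inner_comm (b _), b.sum_repr']
  rw [hsum]
  exact continuous_finsetSum _ fun i _ => (hconv.continuous_inner_gradient hdiff (b i)).smul
    continuous_const

section AlongCurve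

variable {Z : ℝ → E} {g' : E} {t : ℝ}

theorem ConvexOn.hasDerivAt_breg_comp_self (hconv : ConvexOn ℝ univ h)
    (hdiff : Differentiable ℝ h) (hg : HasDerivAt (fun τ => gradient h (Z τ)) g' t)
    (hZ : ContinuousAt Z t) : HasDerivAt (fun τ => breg h (Z t) (Z τ)) 0 t := by
  set g := fun τ => gradient h (Z τ)
  have hbound : ∀ s, ‖breg h (Z t) (Z s)‖ ≤ ‖g s - g t‖ * ‖Z s - Z t‖ := fun s => by
    rw [Real.norm_of_nonneg (breg_nonneg hconv hdiff _ _)]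
    calc breg h (Z t) (Z s) ≤ breg h (Z s) (Z t) + breg h (Z t) (Z s) :=
          le_add_of_nonneg_left (breg_nonneg hconv hdiff _ _)
      _ = ⟪g s - g t, Z s - Z t⟫ := breg_add_breg_swap _ _
      _ ≤ ‖g s - g t‖ * ‖Z s - Z t‖ := real_inner_le_norm _ _
  have hZ' : (fun s => Z s - Z t) =o[𝓝 t] (fun _ => (1 : ℝ)) :=
    (isLittleO_one_iff ℝ).2 (by simpa using hZ.tendsto.sub_const (Z t))
  have hsmall : (fun s => ‖g s - g t‖ * ‖Z s - Z t‖) =o[𝓝 t] fun s => (s - t) * 1 :=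
    hg.isBigO_sub.norm_left.mul_isLittleO hZ'.norm_left
  rw [hasDerivAt_iff_isLittleO]
  simpa using (IsBigO.of_norm_le hbound).trans_isLittleO hsmall

theorem ConvexOn.hasDerivAt_breg_comp (hconv : ConvexOn ℝ univ h) (hdiff : Differentiable ℝ h)
    (y : E) (hg : HasDerivAt (fun τ => gradient h (Z τ)) g' t) (hZ : ContinuousAt Z t) :
    HasDerivAt (fun τ => breg h y (Z τ)) (-⟪g', y - Z t⟫) t := by
  have hlin : HasDerivAt
      (fun τ => breg h y (Z t) - ⟪gradient h (Z τ) - gradient h (Z t), y - Z t⟫)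
      (-⟪g', y - Z t⟫) t := by
    simpa using ((hg.sub_const (gradient h (Z t))).inner ℝ
      (hasDerivAt_const t (y - Z t))).const_sub (breg h y (Z t))
  have hsum := hlin.add (hconv.hasDerivAt_breg_comp_self hdiff hg hZ)
  rw [add_zero] at hsum
  refine hsum.congr_of_eventuallyEq (Eventually.of_forall fun s => ?_)
  rw [Pi.add_apply, ← breg_sub_breg_add_inner y (Z s) (Z t)]
  ring

end AlongCurve

end Bregman

section Lyapunov

variable {E : Type*} [NormedAddCommGroup E] [InnerProductSpace ℝ E] [CompleteSpace E]
  {h f : E → ℝ} {μ : ℝ} {xstar : E} {X Z : ℝ → E}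

theorem hasDerivAt_bregman_energy (hconv : ConvexOn ℝ univ h) (hhdiff : Differentiable ℝ h)
    (hfdiff : Differentiable ℝ f) {ψ : ℝ → ℝ} {ψ' a b t : ℝ} (hψ : HasDerivAt ψ ψ' t)
    (ha : ψ t * a = ψ') (hb : (1 + μ * ψ t) * b = ψ')
    (hX : HasDerivAt X (a • (Z t - X t)) t)
    (hZ : HasDerivAt (fun τ => gradient h (Z τ))
      (b • (μ • gradient h (X t) - μ • gradient h (Z t) - gradient f (X t))) t)
    (hZc : ContinuousAt Z t) :
    HasDerivAt (fun τ => (1 + μ * ψ τ) * breg h xstar (Z τ) + ψ τ * (f (X τ) - f xstar))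
      (ψ' * (μ * breg h xstar (X t) - μ * breg h (Z t) (X t) - breg f xstar (X t))) t := by
  have hD := hconv.hasDerivAt_breg_comp hhdiff xstar hZ hZc
  have hfX := (hfdiff (X t)).hasDerivAt_comp_inner_gradient hX
  refine ((((hψ.const_mul μ).const_add 1).mul hD).add
    (hψ.mul (hfX.sub_const (f xstar)))).congr_deriv ?_
  -- once `ψ a = ψ'` and `(1 + μψ) b = ψ'` are used, what remains is the three-point identity
  linear_combination (norm := skip) ⟪gradient f (X t), Z t - X t⟫ * ha
    - ⟪μ • gradient h (X t) - μ • gradient h (Z t) - gradient f (X t), xstar - Z t⟫ * hb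
  simp only [breg, inner_sub_left, inner_sub_right, real_inner_smul_left, real_inner_smul_right]
  ring

theorem antitoneOn_bregman_energy [FiniteDimensional ℝ E] (hconv : ConvexOn ℝ univ h)
    (hhdiff : Differentiable ℝ h) (hfdiff : Differentiable ℝ f) (hμ : 0 ≤ μ)
    (hunif : ∀ x y : E, μ * breg h x y ≤ breg f x y) {ψ q a b : ℝ → ℝ}
    (hψc : ContinuousOn ψ (Ici 0)) (hψ : ∀ t > 0, HasDerivAt ψ (q t) t)
    (hq : ∀ t > 0, 0 ≤ q t) (ha : ∀ t > 0, ψ t * a t = q t)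
    (hb : ∀ t > 0, (1 + μ * ψ t) * b t = q t)
    (hXc : ContinuousOn X (Ici 0)) (hZc : ContinuousOn Z (Ici 0))
    (hX : ∀ t > 0, HasDerivAt X (a t • (Z t - X t)) t)
    (hZ : ∀ t > 0, HasDerivAt (fun τ => gradient h (Z τ))
      (b t • (μ • gradient h (X t) - μ • gradient h (Z t) - gradient f (X t))) t) :
    AntitoneOn (fun t => (1 + μ * ψ t) * breg h xstar (Z t) + ψ t * (f (X t) - f xstar))
      (Ici 0) := by
  have hgrad_cont := hconv.continuous_gradient hhdiff
  have hh_cont := hhdiff.continuous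
  have hf_cont := hfdiff.continuous
  refine antitoneOn_of_hasDerivWithinAt_nonpos (convex_Ici 0) (f' := fun t => q t *
    (μ * breg h xstar (X t) - μ * breg h (Z t) (X t) - breg f xstar (X t))) ?_
    (fun t ht => ?_) fun t ht => ?_
  · simp only [breg]
    fun_prop
  · rw [interior_Ici, mem_Ioi] at ht
    exact (hasDerivAt_bregman_energy hconv hhdiff hfdiff (hψ t ht) (ha t ht) (hb t ht) (hX t ht)
      (hZ t ht) ((hZc t ht.le).continuousAt (Ici_mem_nhds ht))).hasDerivWithinAt
  · rw [interior_Ici, mem_Ioi] at ht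
    have := mul_nonneg hμ (breg_nonneg hconv hhdiff (Z t) (X t))
    exact mul_nonpos_of_nonneg_of_nonpos (hq t ht) (by linarith [hunif xstar (X t)])

end Lyapunov

noncomputable def sinhc (S : ℝ → ℝ) (x : ℝ) : ℝ :=
  if x = 0 then 1 else S x / x

structure IsSinhP (p : ℝ) (S : ℝ → ℝ) : Prop where
  map_zero : S 0 = 0
  hasDerivWithinAt : ∀ t ∈ Ici (0 : ℝ), HasDerivWithinAt S ((1 + S t ^ p) ^ (1 / p)) (Ici 0) t

namespace IsSinhP

variable {p : ℝ} {S : ℝ → ℝ}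

theorem continuousOn (hS : IsSinhP p S) : ContinuousOn S (Ici 0) :=
  fun t ht => (hS.hasDerivWithinAt t ht).continuousWithinAt

theorem half_le (hS : IsSinhP p S) (hp : 0 < p) {t : ℝ} (ht : 0 ≤ t) : t / 2 ≤ S t := by
  -- `S' ≥ 1` wherever `S ≥ 0`, so `S` is never caught up by the slower line `t / 2`.
  refine image_le_of_deriv_right_lt_deriv_boundary' (a := 0) (f' := fun _ => 1 / 2) (by fun_prop)
    (fun x _ => ((hasDerivAt_id x).div_const 2).hasDerivWithinAt) (by simp [hS.map_zero])
    (hS.continuousOn.mono Icc_subset_Ici_self)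
    (fun x hx => (hS.hasDerivWithinAt x hx.1).mono (Ici_subset_Ici.2 hx.1)) (fun x hx hSx => ?_)
    ⟨ht, le_rfl⟩
  have hSx : 0 ≤ S x := hSx ▸ div_nonneg hx.1 zero_le_two
  calc (1 : ℝ) / 2 < 1 := by norm_num
    _ ≤ (1 + S x ^ p) ^ (1 / p) :=
      Real.one_le_rpow (le_add_of_nonneg_right (Real.rpow_nonneg hSx p)) (by positivity)

theorem nonneg (hS : IsSinhP p S) (hp : 0 < p) {t : ℝ} (ht : 0 ≤ t) : 0 ≤ S t :=
  (div_nonneg ht zero_le_two).trans (hS.half_le hp ht)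

theorem pos (hS : IsSinhP p S) (hp : 0 < p) {t : ℝ} (ht : 0 < t) : 0 < S t :=
  (half_pos ht).trans_le (hS.half_le hp ht.le)

theorem one_add_rpow_pos (hS : IsSinhP p S) (hp : 0 < p) {x : ℝ} (hx : 0 ≤ x) :
    0 < 1 + S x ^ p := by
  have := Real.rpow_nonneg (hS.nonneg hp hx) p
  positivity

theorem sinhc_pos (hS : IsSinhP p S) (hp : 0 < p) {x : ℝ} (hx : 0 ≤ x) : 0 < sinhc S x := by
  rw [sinhc]
  split_ifs with h0
  · exact one_pos
  · have hx' := lt_of_le_of_ne hx (Ne.symm h0)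
    exact div_pos (hS.pos hp hx') hx'

theorem mul_mul_sinhc (hS : IsSinhP p S) (c t : ℝ) : c * (t * sinhc S (c * t)) = S (c * t) := by
  rw [sinhc]
  split_ifs with h0
  · rw [mul_one, h0, hS.map_zero]
  · rw [← mul_assoc, mul_div_cancel₀ _ h0]

theorem mul_sinhc_eq_div (hS : IsSinhP p S) {c : ℝ} (hc : c ≠ 0) :
    (fun t => t * sinhc S (c * t)) = fun t => S (c * t) / c :=
  funext fun t => eq_div_of_mul_eq hc (by rw [mul_comm, hS.mul_mul_sinhc])

theorem continuousOn_mul_sinhc (hS : IsSinhP p S) {c : ℝ} (hc : 0 ≤ c) :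
    ContinuousOn (fun t => t * sinhc S (c * t)) (Ici 0) := by
  rcases hc.eq_or_lt with rfl | hc
  · simp only [zero_mul]
    fun_prop
  · rw [hS.mul_sinhc_eq_div hc.ne']
    exact (hS.continuousOn.comp (continuous_const_mul c).continuousOn
      fun t ht => mul_nonneg hc.le ht).div_const c

theorem hasDerivAt_mul_sinhc (hS : IsSinhP p S) (hp : 0 < p) {c t : ℝ} (hc : 0 ≤ c)
    (ht : 0 < t) :
    HasDerivAt (fun τ => τ * sinhc S (c * τ)) ((1 + S (c * t) ^ p) ^ (1 / p)) t := by
  rcases hc.eq_or_lt with rfl | hc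
  · simpa [sinhc, hS.map_zero, Real.zero_rpow hp.ne'] using hasDerivAt_id' t
  · have hct := mul_pos hc ht
    have hS' := (hS.hasDerivWithinAt _ hct.le).hasDerivAt (Ici_mem_nhds hct)
    rw [hS.mul_sinhc_eq_div hc.ne']
    exact ((hS'.comp t ((hasDerivAt_id' t).const_mul c)).div_const c).congr_deriv (by field_simp)

theorem one_add_rpow_eq (hS : IsSinhP p S) (hp : 0 < p) {c t : ℝ} (hc : 0 ≤ c) (ht : 0 ≤ t) :
    ((1 + S (c * t) ^ p) ^ (1 / p)) ^ p = 1 + c ^ p * (t * sinhc S (c * t)) ^ p := by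
  rw [one_div, Real.rpow_inv_rpow (hS.one_add_rpow_pos hp (mul_nonneg hc ht)).le hp.ne',
    ← hS.mul_mul_sinhc c t,
    Real.mul_rpow hc (mul_nonneg ht (hS.sinhc_pos hp (mul_nonneg hc ht)).le)]

end IsSinhP

-- With `s = sinhc_p(ct)` and `k = cosh_p(ct)`, these identities say that the coefficients of the
-- two flows are `ψ'/ψ` and `ψ'/cosh_p(ct)^p`.
theorem rpow_mul_cothc_eq {p t s k : ℝ} (ht : 0 < t) (hs : 0 < s) (hk : 0 < k) :
    (t * s) ^ p * (p / t * (1 / (s / k))) = k * p * (t * s) ^ (p - 1) := by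
  rw [Real.rpow_sub_one (mul_pos ht hs).ne']
  field_simp

theorem rpow_mul_tanhc_eq {p t s k : ℝ} (ht : 0 < t) (hs : 0 < s) (hk : 0 < k) :
    k ^ p * (p * t ^ (p - 1) * (s / k) ^ (p - 1)) = k * p * (t * s) ^ (p - 1) := by
  rw [Real.div_rpow hs.le hk.le, Real.mul_rpow ht.le hs.le, Real.rpow_sub_one hk.ne' p]
  field_simp

theorem unified_accelerated_tensor_flow_lyapunov_general
    {E : Type*} [NormedAddCommGroup E] [InnerProductSpace ℝ E] [FiniteDimensional ℝ E]
    (p : ℝ) (hp : 2 ≤ p) (C μ : ℝ) (hC : 0 < C) (hμ : 0 ≤ μ)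
    (S : ℝ → ℝ) (hS0 : S 0 = 0)
    (hS : ∀ t ∈ Set.Ici (0 : ℝ),
      HasDerivWithinAt S ((1 + S t ^ p) ^ (1 / p)) (Set.Ici 0) t)
    (coshp sinhcp tanhcp cothcp : ℝ → ℝ)
    (hcoshp : ∀ x, coshp x = (1 + S x ^ p) ^ (1 / p))
    (hsinhcp : ∀ x, sinhcp x = if x = 0 then 1 else S x / x)
    (htanhcp : ∀ x, tanhcp x = sinhcp x / coshp x)
    (hcothcp : ∀ x, cothcp x = 1 / tanhcp x)
    (h f : E → ℝ)
    (hhconv : ConvexOn ℝ Set.univ h) (hhdiff : Differentiable ℝ h)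
    (hfdiff : Differentiable ℝ f)
    (hunif : ∀ x y : E, μ * breg h x y ≤ breg f x y)
    (xstar : E)
    (X Z : ℝ → E)
    (hXcont : ContinuousOn X (Set.Ici 0)) (hZcont : ContinuousOn Z (Set.Ici 0))
    (hflow1 : ∀ t > (0 : ℝ), HasDerivAt X
      ((p / t * cothcp (C ^ (1 / p) * μ ^ (1 / p) * t)) • (Z t - X t)) t)
    (hflow2 : ∀ t > (0 : ℝ), HasDerivAt (fun τ => gradient h (Z τ))
      ((C * p * t ^ (p - 1) * tanhcp (C ^ (1 / p) * μ ^ (1 / p) * t) ^ (p - 1)) •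
        (μ • gradient h (X t) - μ • gradient h (Z t) - gradient f (X t))) t) :
    AntitoneOn (fun t =>
      coshp (C ^ (1 / p) * μ ^ (1 / p) * t) ^ p * breg h xstar (Z t)
        + C * t ^ p * sinhcp (C ^ (1 / p) * μ ^ (1 / p) * t) ^ p * (f (X t) - f xstar))
      (Set.Ici 0) := by
  have hp0 : 0 < p := by linarith
  have hS' : IsSinhP p S := ⟨hS0, hS⟩
  obtain rfl : sinhcp = sinhc S := funext hsinhcp
  set c := C ^ (1 / p) * μ ^ (1 / p) with hc_def
  have hc : 0 ≤ c := by positivity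
  have hcp : c ^ p = C * μ := by
    rw [hc_def, ← Real.mul_rpow hC.le hμ, one_div, Real.rpow_inv_rpow (by positivity) hp0.ne']
  have hs : ∀ t ≥ 0, 0 < sinhc S (c * t) := fun t ht => hS'.sinhc_pos hp0 (mul_nonneg hc ht)
  have hk : ∀ t ≥ 0, 0 < coshp (c * t) := fun t ht =>
    hcoshp _ ▸ Real.rpow_pos_of_pos (hS'.one_add_rpow_pos hp0 (mul_nonneg hc ht)) _
  have hk_rpow : ∀ t ≥ 0, coshp (c * t) ^ p = 1 + μ * (C * (t * sinhc S (c * t)) ^ p) :=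
    fun t ht => by rw [hcoshp, hS'.one_add_rpow_eq hp0 hc ht, hcp]; ring
  refine (antitoneOn_bregman_energy hhconv hhdiff hfdiff hμ hunif (xstar := xstar)
    (ψ := fun t => C * (t * sinhc S (c * t)) ^ p)
    (q := fun t => C * (coshp (c * t) * p * (t * sinhc S (c * t)) ^ (p - 1)))
    ?_ (fun t ht => ?_) (fun t ht => ?_) (fun t ht => ?_) (fun t ht => ?_)
    hXcont hZcont hflow1 hflow2).congr fun t ht => ?_
  · exact continuousOn_const.mul ((hS'.continuousOn_mul_sinhc hc).rpow_const
      fun _ _ => Or.inr hp0.le)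
  · rw [hcoshp]
    exact ((hS'.hasDerivAt_mul_sinhc hp0 hc ht).rpow_const (Or.inr (by linarith))).const_mul C
  · have := hs t ht.le
    have := hk t ht.le
    positivity
  · rw [hcothcp, htanhcp, mul_assoc, rpow_mul_cothc_eq ht (hs t ht.le) (hk t ht.le)]
  · rw [← hk_rpow t ht.le, htanhcp, ← rpow_mul_tanhc_eq ht (hs t ht.le) (hk t ht.le)]
    ring
  · rw [mem_Ici] at ht
    dsimp only
    rw [hk_rpow t ht, Real.mul_rpow ht (hs t ht).le]
    ring

/-- Along the unified accelerated tensor flow, the energy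
`𝓔(t) = cosh_p(C^{1/p}μ^{1/p}t)^p·D_h(x*, Z(t)) + C·t^p·sinhc_p(C^{1/p}μ^{1/p}t)^p·(f(X(t)) − f(x*))`
is monotonically nonincreasing on `[0, ∞)`. -/
theorem unified_accelerated_tensor_flow_lyapunov
    {E : Type*} [NormedAddCommGroup E] [InnerProductSpace ℝ E] [FiniteDimensional ℝ E]
    (p : ℝ) (hp : 2 ≤ p) (C μ : ℝ) (hC : 0 < C) (hμ : 0 ≤ μ)
    (S : ℝ → ℝ) (hS0 : S 0 = 0)
    (hS : ∀ t ∈ Set.Ici (0 : ℝ),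
      HasDerivWithinAt S ((1 + S t ^ p) ^ (1 / p)) (Set.Ici 0) t)
    (coshp sinhcp tanhcp cothcp : ℝ → ℝ)
    (hcoshp : ∀ x, coshp x = (1 + S x ^ p) ^ (1 / p))
    (hsinhcp : ∀ x, sinhcp x = if x = 0 then 1 else S x / x)
    (htanhcp : ∀ x, tanhcp x = sinhcp x / coshp x)
    (hcothcp : ∀ x, cothcp x = 1 / tanhcp x)
    (h f : E → ℝ)
    (hhconv : ConvexOn ℝ Set.univ h) (hhdiff : Differentiable ℝ h)
    (hfdiff : Differentiable ℝ f)
    (hunif : ∀ x y : E, μ * breg h x y ≤ breg f x y)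
    (xstar : E) (hmin : ∀ x, f xstar ≤ f x)
    (X Z : ℝ → E)
    (hXcont : ContinuousOn X (Set.Ici 0)) (hZcont : ContinuousOn Z (Set.Ici 0))
    (hflow1 : ∀ t > (0 : ℝ), HasDerivAt X
      ((p / t * cothcp (C ^ (1 / p) * μ ^ (1 / p) * t)) • (Z t - X t)) t)
    (hflow2 : ∀ t > (0 : ℝ), HasDerivAt (fun τ => gradient h (Z τ))
      ((C * p * t ^ (p - 1) * tanhcp (C ^ (1 / p) * μ ^ (1 / p) * t) ^ (p - 1)) •
        (μ • gradient h (X t) - μ • gradient h (Z t) - gradient f (X t))) t) :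
    AntitoneOn (fun t =>
      coshp (C ^ (1 / p) * μ ^ (1 / p) * t) ^ p * breg h xstar (Z t)
        + C * t ^ p * sinhcp (C ^ (1 / p) * μ ^ (1 / p) * t) ^ p * (f (X t) - f xstar))
      (Set.Ici 0) :=
  unified_accelerated_tensor_flow_lyapunov_general p hp C μ hC hμ S hS0 hS coshp sinhcp tanhcp
    cothcp hcoshp hsinhcp htanhcp hcothcp h f hhconv hhdiff hfdiff hunif xstar X Z hXcont hZcont
    hflow1 hflow2
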